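/- arXiv:2512.06367 — 3 statements merged into one kernel-verified Lean document; each statement's English description precedes it below -/
import Mathlib

section
/- Let G be a graph with no induced C3 or C5, C = v1-...-v7 an induced 7-cycle (indices mod 7), B_i = {x : N(x) ∩ V(C) = {v_{i-1}, v_{i+1}}}. If v ∈ B_i and u ∈ B_j are adjacent, then j ∉ {i, i+2, i-2, i+3} (mod 7). -/
open SimpleGraph

/-- `c` lists the vertices of an induced cycle of length `n` in `G`:
the map is injective and adjacency holds exactly between consecutive vertices. -/
def IsInducedCycle {V : Type*} (G : SimpleGraph V) (n : ℕ) (c : ZMod n → V) : Prop :=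
  Function.Injective c ∧ ∀ i j, G.Adj (c i) (c j) ↔ (i = j + 1 ∨ j = i + 1)

def HasInducedCycle {V : Type*} (G : SimpleGraph V) (n : ℕ) : Prop :=
  ∃ c : ZMod n → V, IsInducedCycle G n c

/-- `G` contains an induced path on `n` vertices. -/
def HasInducedPath {V : Type*} (G : SimpleGraph V) (n : ℕ) : Prop :=
  ∃ p : Fin n → V, Function.Injective p ∧
    ∀ i j, G.Adj (p i) (p j) ↔ (i.val + 1 = j.val ∨ j.val + 1 = i.val)

/-- no pair of distinct non-adjacent vertices with comparable neighborhoods. -/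
def NoComparablePair {V : Type*} (G : SimpleGraph V) : Prop :=
  ∀ u v : V, u ≠ v → ¬ G.Adj u v →
    ¬ (G.neighborSet u ⊆ G.neighborSet v ∨ G.neighborSet v ⊆ G.neighborSet u)

/-- every induced odd cycle of `G` has length 7. -/
def OddCyclesAre7 {V : Type*} (G : SimpleGraph V) : Prop :=
  ∀ n : ℕ, 3 ≤ n → Odd n → HasInducedCycle G n → n = 7

/-- distance from a vertex to an (induced) 7-cycle given by `c`. -/
noncomputable def distToCycle {V : Type*} (G : SimpleGraph V) (c : ZMod 7 → V) (x : V) : ℕ :=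
  sInf {d : ℕ | ∃ i : ZMod 7, G.dist x (c i) = d}

/-- `A_i`: vertices whose neighborhood on the cycle is exactly `{c i}`. -/
def Aset {V : Type*} (G : SimpleGraph V) (c : ZMod 7 → V) (i : ZMod 7) : Set V :=
  {x | G.neighborSet x ∩ Set.range c = {c i}}

/-- `B_i`: vertices whose neighborhood on the cycle is exactly `{c (i-1), c (i+1)}`. -/
def Bset {V : Type*} (G : SimpleGraph V) (c : ZMod 7 → V) (i : ZMod 7) : Set V :=
  {x | G.neighborSet x ∩ Set.range c = {c (i - 1), c (i + 1)}}

/-- the closed neighborhood `N[C]` of the cycle. -/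
def closedNbhd {V : Type*} (G : SimpleGraph V) (c : ZMod 7 → V) : Set V :=
  Set.range c ∪ {x | ∃ i : ZMod 7, G.Adj x (c i)}

lemma zmod3cases' : ∀ x : ZMod 3, x = 0 ∨ x = 1 ∨ x = 2 := by decide
lemma zmod5cases' : ∀ x : ZMod 5, x = 0 ∨ x = 1 ∨ x = 2 ∨ x = 3 ∨ x = 4 := by decide

lemma hasC3' {V : Type*} {G : SimpleGraph V} {a b d : V}
    (hab : G.Adj a b) (hbd : G.Adj b d) (hda : G.Adj d a) :
    HasInducedCycle G 3 := by
  refine ⟨fun k => if k = 0 then a else if k = 1 then b else d, ?_, ?_⟩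
  · intro x y h
    rcases zmod3cases' x with rfl|rfl|rfl <;> rcases zmod3cases' y with rfl|rfl|rfl <;>
      simp_all (config := { decide := true })
        [hab.ne, hbd.ne, hda.ne, hab.ne', hbd.ne', hda.ne']
  · intro x y
    rcases zmod3cases' x with rfl|rfl|rfl <;> rcases zmod3cases' y with rfl|rfl|rfl <;>
      simp (config := { decide := true })
        [hab, hbd, hda, hab.symm, hbd.symm, hda.symm, G.irrefl]

lemma hasC5' {V : Type*} {G : SimpleGraph V} {a b d e f : V}
    (hab : G.Adj a b) (hbd : G.Adj b d) (hde : G.Adj d e) (hef : G.Adj e f) (hfa : G.Adj f a)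
    (nad : ¬ G.Adj a d) (nae : ¬ G.Adj a e) (nbe : ¬ G.Adj b e) (nbf : ¬ G.Adj b f)
    (ndf : ¬ G.Adj d f)
    (had : a ≠ d) (hae : a ≠ e) (hbe : b ≠ e) (hbf : b ≠ f) (hdf : d ≠ f) :
    HasInducedCycle G 5 := by
  have nda : ¬ G.Adj d a := fun h => nad h.symm
  have nea : ¬ G.Adj e a := fun h => nae h.symm
  have neb : ¬ G.Adj e b := fun h => nbe h.symm
  have nfb : ¬ G.Adj f b := fun h => nbf h.symm
  have nfd : ¬ G.Adj f d := fun h => ndf h.symm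
  refine ⟨fun k => if k = 0 then a else if k = 1 then b else if k = 2 then d
      else if k = 3 then e else f, ?_, ?_⟩
  · intro x y h
    rcases zmod5cases' x with rfl|rfl|rfl|rfl|rfl <;>
      rcases zmod5cases' y with rfl|rfl|rfl|rfl|rfl <;>
      simp_all (config := { decide := true }) [hab.ne, hbd.ne, hde.ne, hef.ne, hfa.ne,
        hab.ne', hbd.ne', hde.ne', hef.ne', hfa.ne',
        had, hae, hbe, hbf, hdf, had.symm, hae.symm, hbe.symm, hbf.symm, hdf.symm]
  · intro x y
    rcases zmod5cases' x with rfl|rfl|rfl|rfl|rfl <;>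
      rcases zmod5cases' y with rfl|rfl|rfl|rfl|rfl <;>
      simp (config := { decide := true })
        [hab, hbd, hde, hef, hfa, hab.symm, hbd.symm, hde.symm, hef.symm, hfa.symm,
        nad, nae, nbe, nbf, ndf, nda, nea, neb, nfb, nfd, G.irrefl]

lemma myBsetAdj {V : Type*} {G : SimpleGraph V} {c : ZMod 7 → V}
    (hinj : Function.Injective c) {i : ZMod 7} {x : V} (hx : x ∈ Bset G c i) :
    ∀ k : ZMod 7, G.Adj x (c k) ↔ (k = i + 6 ∨ k = i + 1) := by
  have hx' : G.neighborSet x ∩ Set.range c = {c (i - 1), c (i + 1)} := hx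
  have e1 : i - 1 = i + 6 := by
    rw [sub_eq_add_neg, show (-1 : ZMod 7) = 6 from by decide]
  rw [e1] at hx'
  intro k
  constructor
  · intro h
    have hm : c k ∈ G.neighborSet x ∩ Set.range c := ⟨h, ⟨k, rfl⟩⟩
    rw [hx'] at hm
    rcases hm with hm | hm
    · exact Or.inl (hinj hm)
    · exact Or.inr (hinj hm)
  · rintro (rfl | rfl)
    · exact (show c (i + 6) ∈ G.neighborSet x ∩ Set.range c by
        rw [hx']; exact Or.inl rfl).1
    · exact (show c (i + 1) ∈ G.neighborSet x ∩ Set.range c by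
        rw [hx']; exact Or.inr rfl).1

theorem stmt11 {V : Type*} [Fintype V] (G : SimpleGraph V)
    (h3 : ¬ HasInducedCycle G 3) (h5 : ¬ HasInducedCycle G 5)
    (c : ZMod 7 → V) (hc : IsInducedCycle G 7 c)
    (v u : V) (i j : ZMod 7)
    (hv : v ∈ Bset G c i) (hu : u ∈ Bset G c j) (hadj : G.Adj v u) :
    j ≠ i ∧ j ≠ i + 2 ∧ j ≠ i - 2 ∧ j ≠ i + 3 := by
  have hvA := myBsetAdj hc.1 hv
  have huA := myBsetAdj hc.1 hu
  refine ⟨?_, ?_, ?_, ?_⟩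
  · rintro rfl
    exact h3 (hasC3' hadj ((huA (j + 6)).2 (Or.inl rfl))
      ((hvA (j + 6)).2 (Or.inl rfl)).symm)
  · rintro rfl
    have t1 : G.Adj u (c (i + 1)) :=
      (huA (i + 1)).2 (Or.inl (by rw [add_assoc]; congr 1 <;> decide))
    exact h3 (hasC3' hadj t1 ((hvA (i + 1)).2 (Or.inr rfl)).symm)
  · rintro rfl
    have t1 : G.Adj u (c (i + 6)) :=
      (huA (i + 6)).2 (Or.inr (by rw [sub_eq_add_neg, add_assoc]; congr 1 <;> decide))
    exact h3 (hasC3' hadj t1 ((hvA (i + 6)).2 (Or.inl rfl)).symm)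
  · rintro rfl
    have hbd : G.Adj u (c (i + 4)) :=
      (huA (i + 4)).2 (Or.inr (by rw [add_assoc]; congr 1 <;> decide))
    have hde : G.Adj (c (i + 4)) (c (i + 5)) :=
      (hc.2 _ _).2 (Or.inr (by rw [add_assoc]; congr 1 <;> decide))
    have hef : G.Adj (c (i + 5)) (c (i + 6)) :=
      (hc.2 _ _).2 (Or.inr (by rw [add_assoc]; congr 1 <;> decide))
    have hfa : G.Adj (c (i + 6)) v := ((hvA (i + 6)).2 (Or.inl rfl)).symm
    have nad : ¬ G.Adj v (c (i + 4)) := by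
      rw [hvA]
      rintro (h | h) <;> exact absurd (add_left_cancel h) (by decide)
    have nae : ¬ G.Adj v (c (i + 5)) := by
      rw [hvA]
      rintro (h | h) <;> exact absurd (add_left_cancel h) (by decide)
    have nbe : ¬ G.Adj u (c (i + 5)) := by
      rw [huA]
      rintro (h | h) <;> (try rw [add_assoc] at h) <;>
        exact absurd (add_left_cancel h) (by decide)
    have nbf : ¬ G.Adj u (c (i + 6)) := by
      rw [huA]
      rintro (h | h) <;> (try rw [add_assoc] at h) <;>
        exact absurd (add_left_cancel h) (by decide)
    have ndf : ¬ G.Adj (c (i + 4)) (c (i + 6)) := by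
      rw [hc.2]
      rintro (h | h) <;> (try rw [add_assoc] at h) <;>
        exact absurd (add_left_cancel h) (by decide)
    have had : v ≠ c (i + 4) := fun h => nae (by rw [h]; exact hde)
    have hae : v ≠ c (i + 5) := fun h => nad (by rw [h]; exact hde.symm)
    have hbe : u ≠ c (i + 5) := fun h => nbf (by rw [h]; exact hef)
    have hbf : u ≠ c (i + 6) := fun h => nbe (by rw [h]; exact hef.symm)
    have hdf : c (i + 4) ≠ c (i + 6) :=
      fun h => absurd (add_left_cancel (hc.1 h)) (by decide)
    exact h5 (hasC5' hadj hbd hde hef hfa nad nae nbe nbf ndf had hae hbe hbf hdf)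
end

section
/- Let G be a P10-free graph with all induced odd cycles of length 7 and no comparable pair; let C be an induced 7-cycle with the standard sets A_i, B_i. Let d1 d2 be an edge forming a component of order 2 in G \ N[C] such that d1 has a neighbor a ∈ A_i and d2 has a neighbor a' ∈ A_{i+2}. Then d1 is complete to A_i and d2 is complete to A_{i+2}. -/
open SimpleGraph

/-!
If some `b ∈ A_i` were not adjacent to `d1`, then
`b, c_i, c_{i-1}, …, c_{i-5} = c_{i+2}, a', d2, d1` would be an induced `P10`: the long arc of `C`
from `c_i` to `c_{i+2}`, extended at both ends. The non-edges `b d2` and `b a'` it needs are forced,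
since otherwise `b d2 d1 a c_i`, respectively `b a' c_{i+2} c_{i+1} c_i`, would be an induced `C5`;
the other non-edges come from triangle-freeness and from `d1, d2 ∉ N[C]`. The claim for `d2` is
the same statement for the reflected cycle `j ↦ c (i + 2 - j)`.
-/

section

variable {V : Type*} {G : SimpleGraph V}

def IsInducedPath (G : SimpleGraph V) (n : ℕ) (p : Fin n → V) : Prop :=
  Function.Injective p ∧ ∀ i j, G.Adj (p i) (p j) ↔ (i.val + 1 = j.val ∨ j.val + 1 = i.val)

namespace IsInducedPath

variable {n : ℕ} {p : Fin (n + 1) → V} {x : V}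

theorem cons (hp : IsInducedPath G (n + 1) p) (hx : x ∉ Set.range p) (hfirst : G.Adj x (p 0))
    (hrest : ∀ v ∈ Set.range p, v ≠ p 0 → ¬ G.Adj x v) :
    IsInducedPath G (n + 2) (Fin.cons x p) := by
  have key : ∀ k, G.Adj x (p k) ↔ k = 0 := fun k =>
    ⟨fun h => by_contra fun hk => hrest _ ⟨k, rfl⟩ (hp.1.ne hk) h, fun hk => hk ▸ hfirst⟩
  have key' : ∀ k, G.Adj (p k) x ↔ k = 0 := fun k => G.adj_comm _ _ |>.trans (key k)
  refine ⟨fun j k hjk => ?_, fun j k => ?_⟩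
  · induction j using Fin.cases <;> induction k using Fin.cases <;>
      simp_all [Set.mem_range, hp.1.eq_iff]
  · induction j using Fin.cases <;> induction k using Fin.cases <;>
      simp only [Fin.cons_zero, Fin.cons_succ, Fin.val_succ, Fin.val_zero, key, key', hp.2,
        G.irrefl, Fin.ext_iff] <;> grind

theorem snoc (hp : IsInducedPath G (n + 1) p) (hx : x ∉ Set.range p)
    (hlast : G.Adj (p (Fin.last n)) x)
    (hrest : ∀ v ∈ Set.range p, v ≠ p (Fin.last n) → ¬ G.Adj v x) :
    IsInducedPath G (n + 2) (Fin.snoc p x) := by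
  have key : ∀ k, G.Adj (p k) x ↔ k = Fin.last n := fun k =>
    ⟨fun h => by_contra fun hk => hrest _ ⟨k, rfl⟩ (hp.1.ne hk) h, fun hk => hk ▸ hlast⟩
  have key' : ∀ k, G.Adj x (p k) ↔ k = Fin.last n := fun k => G.adj_comm _ _ |>.trans (key k)
  refine ⟨fun j k hjk => ?_, fun j k => ?_⟩
  · induction j using Fin.lastCases <;> induction k using Fin.lastCases <;>
      simp_all [Set.mem_range, hp.1.eq_iff]
  · induction j using Fin.lastCases <;> induction k using Fin.lastCases <;>
      simp only [Fin.snoc_castSucc, Fin.snoc_last, Fin.val_castSucc, Fin.val_last, key, key',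
        hp.2, G.irrefl, Fin.ext_iff] <;> grind

end IsInducedPath

namespace IsInducedCycle

variable {n : ℕ} {c : ZMod n → V}

theorem isInducedPath_sub (hc : IsInducedCycle G n c) {m : ℕ} (hm : m < n) (k : ZMod n) :
    IsInducedPath G m (fun j : Fin m => c (k - j)) := by
  have hcast : ∀ a b : ℕ, a < n → b < n → ((a : ZMod n) = b ↔ a = b) := fun a b ha hb => by
    rw [ZMod.natCast_eq_natCast_iff', Nat.mod_eq_of_lt ha, Nat.mod_eq_of_lt hb]
  refine ⟨fun j j' h => Fin.ext ?_, fun j j' => ?_⟩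
  · exact (hcast _ _ (by omega) (by omega)).1 (by simpa using hc.1 h)
  · have hshift : ∀ a b : ZMod n, k - a = k - b + 1 ↔ b = a + 1 := fun a b => by
      constructor <;> intro h <;> linear_combination h
    rw [hc.2, hshift, hshift, ← Nat.cast_succ, ← Nat.cast_succ, hcast _ _ (by omega) (by omega),
      hcast _ _ (by omega) (by omega)]
    omega

theorem reflect (hc : IsInducedCycle G n c) (k : ZMod n) :
    IsInducedCycle G n (fun j => c (k - j)) := by
  refine ⟨hc.1.comp (sub_right_injective), fun u v => ?_⟩
  rw [hc.2]
  constructor <;> rintro (h | h) <;> [right; left; right; left] <;> linear_combination h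

end IsInducedCycle

theorem isInducedCycle_three {x y z : V} (hxy : G.Adj x y) (hxz : G.Adj x z) (hyz : G.Adj y z) :
    IsInducedCycle G 3 ![x, y, z] := by
  have hcases : ∀ u : ZMod 3, u = 0 ∨ u = 1 ∨ u = 2 := by decide
  refine ⟨fun u w => ?_, fun u w => ?_⟩ <;>
    obtain rfl | rfl | rfl := hcases u <;> obtain rfl | rfl | rfl := hcases w <;>
    simp [hxy, hxz, hyz, hxy.symm, hxz.symm, hyz.symm, hxy.ne, hxz.ne, hyz.ne,
      hxy.ne.symm, hxz.ne.symm, hyz.ne.symm] <;> decide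

theorem isInducedCycle_five {v₀ v₁ v₂ v₃ v₄ : V}
    (h₀₁ : G.Adj v₀ v₁) (h₁₂ : G.Adj v₁ v₂) (h₂₃ : G.Adj v₂ v₃) (h₃₄ : G.Adj v₃ v₄)
    (h₄₀ : G.Adj v₄ v₀)
    (n₀₂ : ¬ G.Adj v₀ v₂) (n₀₃ : ¬ G.Adj v₀ v₃) (n₁₃ : ¬ G.Adj v₁ v₃) (n₁₄ : ¬ G.Adj v₁ v₄)
    (n₂₄ : ¬ G.Adj v₂ v₄)
    (e₀₂ : v₀ ≠ v₂) (e₀₃ : v₀ ≠ v₃) (e₁₃ : v₁ ≠ v₃) (e₁₄ : v₁ ≠ v₄) (e₂₄ : v₂ ≠ v₄) :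
    IsInducedCycle G 5 ![v₀, v₁, v₂, v₃, v₄] := by
  have hcases : ∀ u : ZMod 5, u = 0 ∨ u = 1 ∨ u = 2 ∨ u = 3 ∨ u = 4 := by decide
  refine ⟨fun u w => ?_, fun u w => ?_⟩ <;>
    obtain rfl | rfl | rfl | rfl | rfl := hcases u <;>
    obtain rfl | rfl | rfl | rfl | rfl := hcases w <;>
    simp [h₀₁, h₁₂, h₂₃, h₃₄, h₄₀, h₀₁.symm, h₁₂.symm, h₂₃.symm, h₃₄.symm, h₄₀.symm,
      h₀₁.ne, h₁₂.ne, h₂₃.ne, h₃₄.ne, h₄₀.ne, h₀₁.ne.symm, h₁₂.ne.symm, h₂₃.ne.symm,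
      h₃₄.ne.symm, h₄₀.ne.symm, n₀₂, n₀₃, n₁₃, n₁₄, n₂₄, mt G.adj_symm n₀₂, mt G.adj_symm n₀₃,
      mt G.adj_symm n₁₃, mt G.adj_symm n₁₄, mt G.adj_symm n₂₄, e₀₂, e₀₃, e₁₃, e₁₄, e₂₄,
      e₀₂.symm, e₀₃.symm, e₁₃.symm, e₁₄.symm, e₂₄.symm] <;> decide

namespace OddCyclesAre7

theorem not_adj_of_adj_of_adj (hG : OddCyclesAre7 G) {x y z : V} (hxy : G.Adj x y)
    (hxz : G.Adj x z) : ¬ G.Adj y z :=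
  fun hyz => absurd (hG 3 le_rfl (by decide) ⟨_, isInducedCycle_three hxy hxz hyz⟩) (by decide)

theorem not_isInducedCycle_five (hG : OddCyclesAre7 G) (v : ZMod 5 → V) :
    ¬ IsInducedCycle G 5 v :=
  fun hv => absurd (hG 5 (by norm_num) (by decide) ⟨v, hv⟩) (by decide)

end OddCyclesAre7

section SevenCycle

variable {c : ZMod 7 → V} {i : ZMod 7} {x : V}

theorem adj_of_mem_Aset (hx : x ∈ Aset G c i) : G.Adj x (c i) :=
  (hx.ge rfl).1

theorem eq_of_mem_Aset_of_adj (hx : x ∈ Aset G c i) {v : V} (hv : v ∈ Set.range c)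
    (h : G.Adj x v) : v = c i :=
  hx.le ⟨h, hv⟩

theorem notMem_range_of_mem_Aset (hc : IsInducedCycle G 7 c) (hx : x ∈ Aset G c i) :
    x ∉ Set.range c := by
  rintro ⟨j, rfl⟩
  have h₁ := eq_of_mem_Aset_of_adj hx ⟨j + 1, rfl⟩ ((hc.2 _ _).2 (Or.inr rfl))
  have h₂ := eq_of_mem_Aset_of_adj hx ⟨j - 1, rfl⟩ ((hc.2 _ _).2 (Or.inl (sub_add_cancel j 1).symm))
  exact absurd (hc.1 (h₁.trans h₂.symm)) (by simp +decide [sub_eq_add_neg])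

theorem notMem_closedNbhd_iff : x ∉ closedNbhd G c ↔ x ∉ Set.range c ∧ ∀ j, ¬ G.Adj x (c j) := by
  simp [closedNbhd]

theorem range_sub (k : ZMod 7) : Set.range (fun j => c (k - j)) = Set.range c :=
  (Equiv.subLeft k).surjective.range_comp c

theorem Aset_sub (k m : ZMod 7) : Aset G (fun j => c (k - j)) m = Aset G c (k - m) := by
  simp only [Aset, range_sub]

theorem closedNbhd_sub (k : ZMod 7) : closedNbhd G (fun j => c (k - j)) = closedNbhd G c := by
  ext x
  simp only [closedNbhd, range_sub, Set.mem_union, Set.mem_ofPred_eq]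
  exact or_congr_right ⟨fun ⟨_, h⟩ => ⟨_, h⟩, fun ⟨j, h⟩ => ⟨k - j, by rwa [sub_sub_cancel]⟩⟩

theorem hasInducedPath_ten (hc : IsInducedCycle G 7 c) {b a' d₁ d₂ : V}
    (hb : b ∈ Aset G c i) (ha' : a' ∈ Aset G c (i + 2))
    (hd₁ : d₁ ∉ closedNbhd G c) (hd₂ : d₂ ∉ closedNbhd G c)
    (h₁₂ : G.Adj d₁ d₂) (h₂a' : G.Adj d₂ a')
    (hbd₁ : ¬ G.Adj b d₁) (hbd₂ : ¬ G.Adj b d₂) (hba' : ¬ G.Adj b a') (h₁a' : ¬ G.Adj d₁ a') :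
    HasInducedPath G 10 := by
  obtain ⟨hd₁r, hd₁c⟩ := notMem_closedNbhd_iff.1 hd₁
  obtain ⟨hd₂r, hd₂c⟩ := notMem_closedNbhd_iff.1 hd₂
  have harc : Set.range (fun j : Fin 6 => c (i - j)) ⊆ Set.range c :=
    Set.range_comp_subset_range _ c
  have hlast : c (i - ((Fin.last 5 : Fin 6) : ℕ)) = c (i + 2) :=
    congrArg c (by simp +decide [sub_eq_add_neg])
  have h₇ := (hc.isInducedPath_sub (by norm_num : 6 < 7) i).cons (x := b)
    (fun h => notMem_range_of_mem_Aset hc hb (harc h)) (by simpa using adj_of_mem_Aset hb)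
    (Set.forall_mem_range.2 fun j hj h => hj (by simpa using eq_of_mem_Aset_of_adj hb ⟨_, rfl⟩ h))
  have h₈ := h₇.snoc (x := a')
    (by
      simp only [Fin.range_cons, Set.mem_insert_iff, not_or]
      exact ⟨fun h => hbd₂ (h ▸ h₂a'.symm), fun h => notMem_range_of_mem_Aset hc ha' (harc h)⟩)
    (by simpa only [Fin.cons_last, hlast] using (adj_of_mem_Aset ha').symm)
    (by
      simp only [Fin.range_cons, Set.forall_mem_insert, Set.forall_mem_range, Fin.cons_last]
      exact ⟨fun _ => hba', fun j hj h =>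
        hj ((eq_of_mem_Aset_of_adj ha' ⟨_, rfl⟩ h.symm).trans hlast.symm)⟩)
  have h₉ := h₈.snoc (x := d₂)
    (by
      simp only [Fin.range_snoc, Fin.range_cons, Set.mem_insert_iff, not_or]
      exact ⟨h₂a'.ne, fun h => hd₂c i (h ▸ adj_of_mem_Aset hb), fun h => hd₂r (harc h)⟩)
    (by simpa only [Fin.snoc_last] using h₂a'.symm)
    (by
      simp only [Fin.range_snoc, Fin.range_cons, Set.forall_mem_insert, Set.forall_mem_range,
        Fin.snoc_last]
      exact ⟨fun h => absurd rfl h, fun _ => hbd₂, fun _ _ h => hd₂c _ h.symm⟩)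
  refine ⟨_, h₉.snoc (x := d₁) ?_ (by simpa only [Fin.snoc_last] using h₁₂.symm) ?_⟩
  · simp only [Fin.range_snoc, Fin.range_cons, Set.mem_insert_iff, not_or]
    exact ⟨h₁₂.ne, fun h => hd₁c (i + 2) (h ▸ adj_of_mem_Aset ha'),
      fun h => hd₁c i (h ▸ adj_of_mem_Aset hb), fun h => hd₁r (harc h)⟩
  · simp only [Fin.range_snoc, Fin.range_cons, Set.forall_mem_insert, Set.forall_mem_range,
      Fin.snoc_last]
    exact ⟨fun h => absurd rfl h, fun _ h => h₁a' h.symm, fun _ => hbd₁, fun _ _ h => hd₁c _ h.symm⟩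

theorem not_adj_of_mem_Aset_of_mem_Aset_add_two (hodd : OddCyclesAre7 G)
    (hc : IsInducedCycle G 7 c) {x y : V} (hx : x ∈ Aset G c i) (hy : y ∈ Aset G c (i + 2)) :
    ¬ G.Adj x y := by
  intro hxy
  have hxc := notMem_range_of_mem_Aset hc hx
  have hyc := notMem_range_of_mem_Aset hc hy
  refine hodd.not_isInducedCycle_five _ (isInducedCycle_five hxy (adj_of_mem_Aset hy)
    ((hc.2 _ _).2 (Or.inl (by ring))) ((hc.2 _ _).2 (Or.inl rfl)) (adj_of_mem_Aset hx).symm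
    (fun h => ?_) (fun h => ?_) (fun h => ?_) (fun h => ?_) ?_
    (fun h => hxc ⟨_, h.symm⟩) (fun h => hxc ⟨_, h.symm⟩) (fun h => hyc ⟨_, h.symm⟩)
    (fun h => hyc ⟨_, h.symm⟩) (hc.1.ne (by simp +decide)))
  · exact absurd (hc.1 (eq_of_mem_Aset_of_adj hx ⟨_, rfl⟩ h)) (by simp +decide)
  · exact absurd (hc.1 (eq_of_mem_Aset_of_adj hx ⟨_, rfl⟩ h)) (by simp +decide)
  · exact absurd (hc.1 (eq_of_mem_Aset_of_adj hy ⟨_, rfl⟩ h)) (by simp +decide)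
  · exact absurd (hc.1 (eq_of_mem_Aset_of_adj hy ⟨_, rfl⟩ h)) (by simp +decide)
  · rw [hc.2]
    simp +decide [add_assoc]

theorem adj_of_mem_Aset_of_adj (hP : ¬ HasInducedPath G 10) (hodd : OddCyclesAre7 G)
    (hc : IsInducedCycle G 7 c) {d₁ d₂ a a' b : V}
    (hd₁ : d₁ ∉ closedNbhd G c) (hd₂ : d₂ ∉ closedNbhd G c) (h₁₂ : G.Adj d₁ d₂)
    (ha : a ∈ Aset G c i) (ha' : a' ∈ Aset G c (i + 2)) (h₁a : G.Adj d₁ a) (h₂a' : G.Adj d₂ a')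
    (hb : b ∈ Aset G c i) : G.Adj d₁ b := by
  by_contra hbd₁
  obtain ⟨hd₁r, hd₁c⟩ := notMem_closedNbhd_iff.1 hd₁
  obtain ⟨hd₂r, hd₂c⟩ := notMem_closedNbhd_iff.1 hd₂
  have hac := adj_of_mem_Aset ha
  have hbc := adj_of_mem_Aset hb
  have hbd₂ : ¬ G.Adj b d₂ := fun hbd₂ =>
    hodd.not_isInducedCycle_five _ <| isInducedCycle_five hbd₂ h₁₂.symm h₁a hac hbc.symm
      (fun h => hbd₁ h.symm) (hodd.not_adj_of_adj_of_adj hbc.symm hac.symm)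
      (hodd.not_adj_of_adj_of_adj h₁₂ h₁a) (hd₂c i) (hd₁c i)
      (fun h => hd₁c i (h ▸ hbc)) (fun h => hbd₁ (h ▸ h₁a)) (fun h => hd₂c i (h ▸ hac))
      (fun h => hd₂r ⟨i, h.symm⟩) (fun h => hd₁r ⟨i, h.symm⟩)
  exact hP <| hasInducedPath_ten hc hb ha' hd₁ hd₂ h₁₂ h₂a' (fun h => hbd₁ h.symm) hbd₂
    (not_adj_of_mem_Aset_of_mem_Aset_add_two hodd hc hb ha')
    (hodd.not_adj_of_adj_of_adj h₁₂.symm h₂a')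

end SevenCycle

end

theorem stmt15_general {V : Type*} (G : SimpleGraph V)
    (hP : ¬ HasInducedPath G 10) (hodd : OddCyclesAre7 G)
    (c : ZMod 7 → V) (hc : IsInducedCycle G 7 c)
    (d1 d2 : V)
    (hd1 : d1 ∉ closedNbhd G c) (hd2 : d2 ∉ closedNbhd G c)
    (h12 : G.Adj d1 d2)
    (i : ZMod 7) (a a' : V)
    (ha : a ∈ Aset G c i) (ha' : a' ∈ Aset G c (i + 2))
    (h1a : G.Adj d1 a) (h2a : G.Adj d2 a') :
    (∀ b ∈ Aset G c i, G.Adj d1 b) ∧ (∀ b ∈ Aset G c (i + 2), G.Adj d2 b) := by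
  refine ⟨fun b => adj_of_mem_Aset_of_adj hP hodd hc hd1 hd2 h12 ha ha' h1a h2a, fun b hb => ?_⟩
  have hA₀ : Aset G (fun j => c (i + 2 - j)) 0 = Aset G c (i + 2) := by
    rw [Aset_sub, sub_zero]
  have hA₂ : Aset G (fun j => c (i + 2 - j)) (0 + 2) = Aset G c i := by
    rw [Aset_sub, zero_add, add_sub_cancel_right]
  rw [← closedNbhd_sub (i + 2)] at hd1 hd2
  exact adj_of_mem_Aset_of_adj hP hodd (hc.reflect (i + 2)) hd2 hd1 h12.symm
    (hA₀ ▸ ha') (hA₂ ▸ ha) h2a h1a (hA₀ ▸ hb)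

theorem stmt15 {V : Type*} [Fintype V] (G : SimpleGraph V)
    (hP : ¬ HasInducedPath G 10) (hodd : OddCyclesAre7 G)
    (hcomp : NoComparablePair G)
    (c : ZMod 7 → V) (hc : IsInducedCycle G 7 c)
    (d1 d2 : V)
    (hd1 : d1 ∉ closedNbhd G c) (hd2 : d2 ∉ closedNbhd G c)
    (h12 : G.Adj d1 d2)
    (hcompo : ∀ w : V, w ∉ closedNbhd G c → w ≠ d1 → w ≠ d2 →
      ¬ G.Adj w d1 ∧ ¬ G.Adj w d2)
    (i : ZMod 7) (a a' : V)
    (ha : a ∈ Aset G c i) (ha' : a' ∈ Aset G c (i + 2))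
    (h1a : G.Adj d1 a) (h2a : G.Adj d2 a') :
    (∀ b ∈ Aset G c i, G.Adj d1 b) ∧ (∀ b ∈ Aset G c (i + 2), G.Adj d2 b) :=
  stmt15_general G hP hodd c hc d1 d2 hd1 hd2 h12 i a a' ha ha' h1a h2a
end

section
/- Let G be a P10-free graph with all induced odd cycles of length 7 and no comparable pair, with induced 7-cycle C. Suppose d ∈ D2 (distance 3 from C) has two neighbors x1, x2 in D1'' such that x1 has a neighbor in B_i and x2 has a neighbor in B_{i+3}. Then x1 has neighbors in both B_i and B_{i+2}, and x2 has neighbors in both B_{i+1} and B_{i+3}. -/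
open SimpleGraph

/-!
Rotate the cycle so that `i = 0`, and let `x₁ ∼ b₁ ∈ B₀` and `x₂ ∼ b₂ ∈ B₃`. As `b₂` and `c₃` are
non-adjacent, they are not comparable, so some neighbour `z` of `c₃` misses `b₂`. Excluding
induced `C₃` and `C₅` fixes most adjacencies among these vertices. Then `z ∼ x₁`, as otherwise
`c₀ c₆ b₁ x₁ d x₂ b₂ c₂ c₃ z` is an induced `P₁₀`, and `z ∼ c₁`, as otherwise
`c₁ c₀ c₆ c₅ c₄ c₃ z x₁ d x₂` is one. Hence `z ∈ B₂` is a neighbour of `x₁`. The claim for `x₂`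
follows by reflecting the cycle.
-/

section

variable {V : Type*} {G : SimpleGraph V}

theorem injective_of_adj_iff {ι : Type*} {p : ι → V} {R : ι → ι → Prop}
    (hp : ∀ a b, G.Adj (p a) (p b) ↔ R a b) (hR : ∀ a b, (∀ k, R a k ↔ R b k) → a = b) :
    Function.Injective p :=
  fun a b hab => hR a b fun k => by rw [← hp, ← hp, hab]

theorem hasInducedPath_of_adj_iff {n : ℕ} (hn : 4 ≤ n) (p : Fin n → V)
    (hp : ∀ a b : Fin n, a < b → (G.Adj (p a) (p b) ↔ a.val + 1 = b.val)) :
    HasInducedPath G n := by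
  have hadj : ∀ a b, G.Adj (p a) (p b) ↔ (a.val + 1 = b.val ∨ b.val + 1 = a.val) := by
    intro a b
    rcases lt_trichotomy a b with h | rfl | h
    · rw [hp a b h]; omega
    · simp
    · rw [G.adj_comm, hp b a h]; omega
  refine ⟨p, injective_of_adj_iff hadj fun a b hN => ?_, hadj⟩
  -- on at least four vertices, distinct vertices of a path have distinct neighbourhoods
  have := hN ⟨a.val - 1, by omega⟩
  have := hN ⟨b.val - 1, by omega⟩
  have := hN ⟨1, by omega⟩
  have := hN ⟨3, by omega⟩
  ext
  simp only at *
  omega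

theorem NoComparablePair.exists_adj_not_adj (hcomp : NoComparablePair G) {u v : V} (hne : u ≠ v)
    (huv : ¬ G.Adj u v) : ∃ z, G.Adj z v ∧ ¬ G.Adj z u := by
  by_contra! h
  exact hcomp u v hne huv (.inr fun z hz => (h z hz.symm).symm)

theorem not_adj_of_three_le_dist {u v : V} (h : 3 ≤ G.dist u v) : ¬ G.Adj u v := fun huv => by
  rw [dist_eq_one_iff_adj.2 huv] at h
  omega

theorem not_adj_of_adj_of_three_le_dist {u v w : V} (h : 3 ≤ G.dist u v) (hwv : G.Adj w v) :
    ¬ G.Adj u w := fun huw => by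
  have := G.dist_le (.cons huw (.cons hwv .nil))
  simp only [Walk.length_cons, Walk.length_nil] at this
  omega

theorem distToCycle_le_dist (c : ZMod 7 → V) (x : V) (j : ZMod 7) :
    distToCycle G c x ≤ G.dist x (c j) :=
  Nat.sInf_le ⟨j, rfl⟩

theorem mem_Bset_iff {c : ZMod 7 → V} (hc : Function.Injective c) {b : V} {j : ZMod 7} :
    b ∈ Bset G c j ↔ ∀ k, G.Adj b (c k) ↔ k = j - 1 ∨ k = j + 1 := by
  simp only [Bset, Set.ext_iff, Set.mem_inter_iff, mem_neighborSet, Set.mem_range,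
    Set.mem_insert_iff, Set.mem_singleton_iff]
  constructor
  · intro h k
    simpa [hc.eq_iff] using h (c k)
  · rintro h y
    constructor
    · rintro ⟨hy, k, rfl⟩
      simpa [hc.eq_iff] using (h k).1 hy
    · rintro (rfl | rfl) <;> exact ⟨(h _).2 (by simp), _, rfl⟩

theorem IsInducedCycle.comp_add {n : ℕ} {c : ZMod n → V} (hc : IsInducedCycle G n c)
    (a : ZMod n) : IsInducedCycle G n (fun j => c (a + j)) :=
  ⟨hc.1.comp (add_right_injective a), fun i j => by rw [hc.2]; grind⟩

theorem IsInducedCycle.comp_sub {n : ℕ} {c : ZMod n → V} (hc : IsInducedCycle G n c)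
    (a : ZMod n) : IsInducedCycle G n (fun j => c (a - j)) :=
  ⟨hc.1.comp sub_right_injective, fun i j => by rw [hc.2]; grind⟩

theorem Bset_comp_add (c : ZMod 7 → V) (a j : ZMod 7) :
    Bset G (fun k => c (a + k)) j = Bset G c (a + j) := by
  have hrange : Set.range (fun k => c (a + k)) = Set.range c :=
    (Equiv.addLeft a).surjective.range_comp c
  simp only [Bset, hrange, add_sub_assoc, add_assoc]

theorem Bset_comp_sub (c : ZMod 7 → V) (a j : ZMod 7) :
    Bset G (fun k => c (a - k)) j = Bset G c (a - j) := by
  have hrange : Set.range (fun k => c (a - k)) = Set.range c :=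
    (Equiv.subLeft a).surjective.range_comp c
  have e1 : a - (j - 1) = a - j + 1 := by ring
  have e2 : a - (j + 1) = a - j - 1 := by ring
  simp only [Bset, hrange, e1, e2, Set.pair_comm]

namespace OddCyclesAre7

theorem false_of_triangle (hodd : OddCyclesAre7 G) {u v w : V}
    (huv : G.Adj u v) (hvw : G.Adj v w) (huw : G.Adj u w) : False := by
  have hp : ∀ a b : Fin 3, G.Adj (![u, v, w] a) (![u, v, w] b) ↔ a = b + 1 ∨ b = a + 1 := by
    intro a b
    fin_cases a <;> fin_cases b <;> simp +decide <;> grind [SimpleGraph.adj_comm]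
  have hinj : Function.Injective ![u, v, w] := injective_of_adj_iff hp (by decide)
  exact absurd (hodd 3 le_rfl (by decide) ⟨_, hinj, hp⟩) (by decide)

theorem false_of_pentagon (hodd : OddCyclesAre7 G) (p : Fin 5 → V)
    (hp : ∀ a b, G.Adj (p a) (p b) ↔ a = b + 1 ∨ b = a + 1) : False := by
  have hinj : Function.Injective p := injective_of_adj_iff hp (by decide)
  exact absurd (hodd 5 (by decide) (by decide) ⟨p, hinj, hp⟩) (by decide)

variable {c : ZMod 7 → V} {z : V} {j : ZMod 7}

theorem not_adj_cycle_add_one (hodd : OddCyclesAre7 G) (hc : IsInducedCycle G 7 c)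
    (hz : G.Adj z (c j)) : ¬ G.Adj z (c (j + 1)) :=
  fun h => hodd.false_of_triangle hz ((hc.2 _ _).2 (.inr rfl)) h

theorem not_adj_cycle_add_three (hodd : OddCyclesAre7 G) (hc : IsInducedCycle G 7 c)
    (hz : G.Adj z (c j)) : ¬ G.Adj z (c (j + 3)) := by
  intro h
  have h1 := hodd.not_adj_cycle_add_one hc hz
  have h2 : ¬ G.Adj z (c (j + 2)) :=
    fun h' => hodd.not_adj_cycle_add_one hc h' (by convert h using 2; ring)
  refine hodd.false_of_pentagon ![z, c j, c (j + 1), c (j + 2), c (j + 3)] fun a b => ?_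
  fin_cases a <;> fin_cases b <;> simp +decide <;> grind [SimpleGraph.adj_comm, hc.2]

end OddCyclesAre7

variable {c : ZMod 7 → V}

theorem not_adj_of_mem_Bset_zero_of_mem_Bset_three (hodd : OddCyclesAre7 G)
    (hc : IsInducedCycle G 7 c) {d x1 x2 b1 b2 : V} (hd : ∀ j, 3 ≤ G.dist d (c j))
    (h1 : G.Adj d x1) (h2 : G.Adj d x2) (hb1 : b1 ∈ Bset G c 0) (hxb1 : G.Adj x1 b1)
    (hb2 : b2 ∈ Bset G c 3) (hxb2 : G.Adj x2 b2) :
    ¬ G.Adj x1 x2 ∧ ¬ G.Adj b1 b2 ∧ ¬ G.Adj x1 b2 ∧ ¬ G.Adj x2 b1 := by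
  rw [mem_Bset_iff hc.1] at hb1 hb2
  have hx1c : ∀ j, ¬ G.Adj x1 (c j) := fun j h => not_adj_of_adj_of_three_le_dist (hd j) h h1
  have hx2c : ∀ j, ¬ G.Adj x2 (c j) := fun j h => not_adj_of_adj_of_three_le_dist (hd j) h h2
  -- Here and in the next proof, each forbidden pentagon or path is verified pair by pair from
  -- the (non-)adjacencies already in the context, read in either orientation.
  have hb1b2 : ¬ G.Adj b1 b2 := fun h => by
    refine hodd.false_of_pentagon ![b1, c 6, c 5, c 4, b2] fun a b => ?_
    fin_cases a <;> fin_cases b <;> simp +decide [hc.2, *] <;> rw [adj_comm] <;> simp +decide [*]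
  refine ⟨fun h => hodd.false_of_triangle h1 h h2, hb1b2, fun h => ?_, fun h => ?_⟩
  · refine hodd.false_of_pentagon ![x1, b1, c 1, c 2, b2] fun a b => ?_
    fin_cases a <;> fin_cases b <;> simp +decide [hc.2, *] <;> rw [adj_comm] <;> simp +decide [*]
  · refine hodd.false_of_pentagon ![x2, b2, c 2, c 1, b1] fun a b => ?_
    fin_cases a <;> fin_cases b <;> simp +decide [hc.2, *] <;> rw [adj_comm] <;> simp +decide [*]

theorem exists_adj_mem_Bset_two (hP : ¬ HasInducedPath G 10) (hodd : OddCyclesAre7 G)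
    (hcomp : NoComparablePair G) (hc : IsInducedCycle G 7 c) {d x1 x2 b1 b2 : V}
    (hd : ∀ j, 3 ≤ G.dist d (c j)) (h1 : G.Adj d x1) (h2 : G.Adj d x2)
    (hb1 : b1 ∈ Bset G c 0) (hxb1 : G.Adj x1 b1) (hb2 : b2 ∈ Bset G c 3) (hxb2 : G.Adj x2 b2) :
    ∃ b ∈ Bset G c 2, G.Adj x1 b := by
  obtain ⟨hx1x2, hb1b2, hx1b2, hx2b1⟩ :=
    not_adj_of_mem_Bset_zero_of_mem_Bset_three hodd hc hd h1 h2 hb1 hxb1 hb2 hxb2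
  rw [mem_Bset_iff hc.1] at hb1 hb2
  have hdc : ∀ j, ¬ G.Adj d (c j) := fun j => not_adj_of_three_le_dist (hd j)
  have hx1c : ∀ j, ¬ G.Adj x1 (c j) := fun j h => not_adj_of_adj_of_three_le_dist (hd j) h h1
  have hx2c : ∀ j, ¬ G.Adj x2 (c j) := fun j h => not_adj_of_adj_of_three_le_dist (hd j) h h2
  have hdb1 : ¬ G.Adj d b1 := not_adj_of_adj_of_three_le_dist (hd 1) ((hb1 1).2 (by decide))
  have hdb2 : ¬ G.Adj d b2 := not_adj_of_adj_of_three_le_dist (hd 2) ((hb2 2).2 (by decide))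
  obtain ⟨z, hzc3, hzb2⟩ := hcomp.exists_adj_not_adj (u := b2) (v := c 3)
    (fun h => hx2c 3 (h ▸ hxb2)) (fun h => absurd ((hb2 3).1 h) (by decide))
  have hdz : ¬ G.Adj d z := not_adj_of_adj_of_three_le_dist (hd 3) hzc3
  have hzc0 : ¬ G.Adj z (c 0) := fun h => hodd.not_adj_cycle_add_three hc h hzc3
  have hzc2 : ¬ G.Adj z (c 2) := fun h => hodd.not_adj_cycle_add_one hc h hzc3
  have hzc4 : ¬ G.Adj z (c 4) := hodd.not_adj_cycle_add_one hc hzc3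
  have hzc6 : ¬ G.Adj z (c 6) := hodd.not_adj_cycle_add_three hc hzc3
  have hzb1 : ¬ G.Adj z b1 := fun h => by
    by_cases hzc1 : G.Adj z (c 1)
    · exact hodd.false_of_triangle h ((hb1 1).2 (by decide)) hzc1
    refine hodd.false_of_pentagon ![z, b1, c 1, c 2, c 3] fun a b => ?_
    fin_cases a <;> fin_cases b <;> simp +decide [hc.2, *] <;> rw [adj_comm] <;> simp +decide [*]
  have hzx2 : ¬ G.Adj z x2 := fun h => by
    refine hodd.false_of_pentagon ![z, x2, b2, c 2, c 3] fun a b => ?_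
    fin_cases a <;> fin_cases b <;> simp +decide [hc.2, *] <;> rw [adj_comm] <;> simp +decide [*]
  have hzx1 : G.Adj z x1 := by
    by_contra hzx1
    refine hP (hasInducedPath_of_adj_iff (by norm_num)
      ![c 0, c 6, b1, x1, d, x2, b2, c 2, c 3, z] fun a b hab => ?_)
    fin_cases a <;> fin_cases b <;> simp +decide [hc.2, *] at hab ⊢ <;> rw [adj_comm] <;>
      simp +decide [*]
  have hzc5 : ¬ G.Adj z (c 5) := fun h => by
    refine hodd.false_of_pentagon ![z, c 5, c 6, b1, x1] fun a b => ?_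
    fin_cases a <;> fin_cases b <;> simp +decide [hc.2, *] <;> rw [adj_comm] <;> simp +decide [*]
  have hzc1 : G.Adj z (c 1) := by
    by_contra hzc1
    refine hP (hasInducedPath_of_adj_iff (by norm_num)
      ![c 1, c 0, c 6, c 5, c 4, c 3, z, x1, d, x2] fun a b hab => ?_)
    fin_cases a <;> fin_cases b <;> simp +decide [hc.2, *] at hab ⊢ <;> rw [adj_comm] <;>
      simp +decide [*]
  refine ⟨z, (mem_Bset_iff hc.1).2 fun k => ?_, hzx1.symm⟩
  obtain rfl | rfl | rfl | rfl | rfl | rfl | rfl :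
      k = 0 ∨ k = 1 ∨ k = 2 ∨ k = 3 ∨ k = 4 ∨ k = 5 ∨ k = 6 := by
    revert k; decide
  all_goals simp +decide [*]

theorem exists_adj_mem_Bset_add_two (hP : ¬ HasInducedPath G 10) (hodd : OddCyclesAre7 G)
    (hcomp : NoComparablePair G) (hc : IsInducedCycle G 7 c) {d x1 x2 : V}
    (hd : ∀ j, 3 ≤ G.dist d (c j)) (h1 : G.Adj d x1) (h2 : G.Adj d x2) {i : ZMod 7}
    (hb1 : ∃ b ∈ Bset G c i, G.Adj x1 b) (hb2 : ∃ b ∈ Bset G c (i + 3), G.Adj x2 b) :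
    ∃ b ∈ Bset G c (i + 2), G.Adj x1 b := by
  obtain ⟨b1, hb1, hxb1⟩ := hb1
  obtain ⟨b2, hb2, hxb2⟩ := hb2
  rw [← add_zero i, ← Bset_comp_add] at hb1
  rw [← Bset_comp_add] at hb2 ⊢
  exact exists_adj_mem_Bset_two hP hodd hcomp (hc.comp_add i) (fun j => hd (i + j)) h1 h2
    hb1 hxb1 hb2 hxb2

theorem exists_adj_mem_Bset_add_one (hP : ¬ HasInducedPath G 10) (hodd : OddCyclesAre7 G)
    (hcomp : NoComparablePair G) (hc : IsInducedCycle G 7 c) {d x1 x2 : V}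
    (hd : ∀ j, 3 ≤ G.dist d (c j)) (h1 : G.Adj d x1) (h2 : G.Adj d x2) {i : ZMod 7}
    (hb1 : ∃ b ∈ Bset G c i, G.Adj x1 b) (hb2 : ∃ b ∈ Bset G c (i + 3), G.Adj x2 b) :
    ∃ b ∈ Bset G c (i + 1), G.Adj x2 b := by
  -- reflect the cycle in the axis `j ↦ 2 * i + 3 - j`, which swaps `B_i` and `B_{i+3}`
  have hrefl := Bset_comp_sub (G := G) c (2 * i + 3)
  have key := exists_adj_mem_Bset_add_two hP hodd hcomp (hc.comp_sub (2 * i + 3))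
    (fun j => hd _) h2 h1 (i := i) ?_ ?_
  · rwa [hrefl, show 2 * i + 3 - (i + 2) = i + 1 by ring] at key
  · rwa [hrefl, show 2 * i + 3 - i = i + 3 by ring]
  · rwa [hrefl, show 2 * i + 3 - (i + 3) = i by ring]

end

theorem stmt16_general {V : Type*} (G : SimpleGraph V)
    (hP : ¬ HasInducedPath G 10) (hodd : OddCyclesAre7 G)
    (hcomp : NoComparablePair G)
    (c : ZMod 7 → V) (hc : IsInducedCycle G 7 c)
    (d x1 x2 : V) (hd : distToCycle G c d = 3)
    (h1 : G.Adj d x1) (h2 : G.Adj d x2)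
    (i : ZMod 7)
    (hb1 : ∃ b ∈ Bset G c i, G.Adj x1 b)
    (hb2 : ∃ b ∈ Bset G c (i + 3), G.Adj x2 b) :
    (∃ b ∈ Bset G c i, G.Adj x1 b) ∧ (∃ b ∈ Bset G c (i + 2), G.Adj x1 b) ∧
    (∃ b ∈ Bset G c (i + 1), G.Adj x2 b) ∧ (∃ b ∈ Bset G c (i + 3), G.Adj x2 b) := by
  have hd' : ∀ j, 3 ≤ G.dist d (c j) := fun j => hd ▸ distToCycle_le_dist c d j
  exact ⟨hb1, exists_adj_mem_Bset_add_two hP hodd hcomp hc hd' h1 h2 hb1 hb2,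
    exists_adj_mem_Bset_add_one hP hodd hcomp hc hd' h1 h2 hb1 hb2, hb2⟩

theorem stmt16 {V : Type*} [Fintype V] (G : SimpleGraph V)
    (hP : ¬ HasInducedPath G 10) (hodd : OddCyclesAre7 G)
    (hcomp : NoComparablePair G)
    (c : ZMod 7 → V) (hc : IsInducedCycle G 7 c)
    (d x1 x2 : V) (hd : distToCycle G c d = 3)
    (hx1 : distToCycle G c x1 = 2) (hx2 : distToCycle G c x2 = 2)
    (hne : x1 ≠ x2) (h1 : G.Adj d x1) (h2 : G.Adj d x2)
    (i : ZMod 7)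
    (hb1 : ∃ b ∈ Bset G c i, G.Adj x1 b)
    (hb2 : ∃ b ∈ Bset G c (i + 3), G.Adj x2 b) :
    (∃ b ∈ Bset G c i, G.Adj x1 b) ∧ (∃ b ∈ Bset G c (i + 2), G.Adj x1 b) ∧
    (∃ b ∈ Bset G c (i + 1), G.Adj x2 b) ∧ (∃ b ∈ Bset G c (i + 3), G.Adj x2 b) :=
  stmt16_general G hP hodd hcomp c hc d x1 x2 hd h1 h2 i hb1 hb2
end
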